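/- arXiv:2512.21802 — 2 statements merged into one kernel-verified Lean document; each statement's English description precedes it below -/
import Mathlib

section
/- For every function f in H^2(0,1) ∩ H^1_0(0,1), the L^∞ norm of f' on (0,1) satisfies ‖f'‖_{L^∞} ≤ √2 · ‖f‖_{L^2}^{1/4} · ‖f''‖_{L^2}^{3/4}. -/
open MeasureTheory intervalIntegral

lemma aux_memLp2 (u : ℝ → ℝ) (hu : Continuous u) :
    MemLp u (ENNReal.ofReal 2) (volume.restrict (Set.Ioc (0:ℝ) 1)) := by
  have hfin : IsFiniteMeasure (volume.restrict (Set.Ioc (0:ℝ) 1)) := ⟨by simp⟩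
  obtain ⟨C, hC⟩ := (isCompact_Icc (a := (0:ℝ)) (b := 1)).exists_bound_of_continuousOn
    hu.continuousOn
  have htop : MemLp u ⊤ (volume.restrict (Set.Ioc (0:ℝ) 1)) := by
    apply memLp_top_of_bound (hu.aestronglyMeasurable.restrict) C
    rw [ae_restrict_iff' measurableSet_Ioc]
    filter_upwards with x hx
    exact hC x (Set.Ioc_subset_Icc_self hx)
  exact htop.mono_exponent le_top

lemma aux_CS (u v : ℝ → ℝ) (hu : Continuous u) (hv : Continuous v) :
    ∫ t in (0:ℝ)..1, |u t| * |v t| ≤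
      (∫ t in (0:ℝ)..1, u t ^ 2) ^ ((1:ℝ)/2) * (∫ t in (0:ℝ)..1, v t ^ 2) ^ ((1:ℝ)/2) := by
  have h01 : (0:ℝ) ≤ 1 := by norm_num
  rw [intervalIntegral.integral_of_le h01, intervalIntegral.integral_of_le h01,
    intervalIntegral.integral_of_le h01]
  have key := integral_mul_le_Lp_mul_Lq_of_nonneg (μ := volume.restrict (Set.Ioc (0:ℝ) 1))
    (f := fun t => |u t|) (g := fun t => |v t|)
    (Real.holderConjugate_iff_eq_conjExponent (by norm_num) |>.mpr (by norm_num))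
    (Filter.Eventually.of_forall fun t => abs_nonneg _)
    (Filter.Eventually.of_forall fun t => abs_nonneg _)
    ((aux_memLp2 u hu).abs) ((aux_memLp2 v hv).abs)
  simpa [Real.rpow_natCast, sq_abs, Real.rpow_two] using key

/-- Interpolation inequality: for `f ∈ H²(0,1) ∩ H¹₀(0,1)` (represented by a `C²` function
vanishing at the endpoints), `‖f'‖_{L^∞} ≤ √2 ‖f‖_{L²}^{1/4} ‖f''‖_{L²}^{3/4}`. -/
theorem stmt0 (f : ℝ → ℝ) (hf : ContDiff ℝ 2 f) (h0 : f 0 = 0) (h1 : f 1 = 0) :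
    ∀ x ∈ Set.Icc (0:ℝ) 1,
      |deriv f x| ≤ Real.sqrt 2 * (∫ t in (0:ℝ)..1, (f t) ^ 2) ^ ((1:ℝ)/8) *
        (∫ t in (0:ℝ)..1, (deriv (deriv f) t) ^ 2) ^ ((3:ℝ)/8) := by
  intro x hx
  -- smoothness facts
  have hf1 : ContDiff ℝ 1 (deriv f) := by
    have h2 : ((2:WithTop ℕ∞)) = 1 + 1 := by norm_num
    rw [h2, contDiff_succ_iff_deriv] at hf
    exact hf.2.2
  have hdf : Differentiable ℝ f := hf.differentiable (by norm_num)
  have hdf' : Differentiable ℝ (deriv f) := hf1.differentiable (by norm_num)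
  have hcf : Continuous f := hf.continuous
  have hcf' : Continuous (deriv f) := hdf'.continuous
  have hcf'' : Continuous (deriv (deriv f)) := hf1.continuous_deriv le_rfl
  set P := ∫ t in (0:ℝ)..1, (f t) ^ 2 with hP
  set Q := ∫ t in (0:ℝ)..1, (deriv (deriv f) t) ^ 2 with hQ
  set R := ∫ t in (0:ℝ)..1, (deriv f t) ^ 2 with hR
  have hPpos : 0 ≤ P := intervalIntegral.integral_nonneg (by norm_num) fun t _ => sq_nonneg _
  have hQpos : 0 ≤ Q := intervalIntegral.integral_nonneg (by norm_num) fun t _ => sq_nonneg _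
  have hRpos : 0 ≤ R := intervalIntegral.integral_nonneg (by norm_num) fun t _ => sq_nonneg _
  -- integration by parts: R ≤ P^(1/2) * Q^(1/2)
  have hparts : ∫ t in (0:ℝ)..1, f t * deriv (deriv f) t
      = f 1 * deriv f 1 - f 0 * deriv f 0 - ∫ t in (0:ℝ)..1, deriv f t * deriv f t := by
    apply intervalIntegral.integral_mul_deriv_eq_deriv_mul
      (fun t _ => (hdf t).hasDerivAt) (fun t _ => (hdf' t).hasDerivAt)
      (hcf'.intervalIntegrable _ _) (hcf''.intervalIntegrable _ _)
  have hRle : R ≤ P ^ ((1:ℝ)/2) * Q ^ ((1:ℝ)/2) := by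
    have h1' : R = - ∫ t in (0:ℝ)..1, f t * deriv (deriv f) t := by
      rw [hparts, h0, h1]; simp [hR, sq]
    have h2' : - ∫ t in (0:ℝ)..1, f t * deriv (deriv f) t
        ≤ ∫ t in (0:ℝ)..1, |f t| * |deriv (deriv f) t| := by
      have := intervalIntegral.abs_integral_le_integral_abs (a := (0:ℝ)) (b := 1) (μ := volume)
        (f := fun t => f t * deriv (deriv f) t) (by norm_num)
      calc - ∫ t in (0:ℝ)..1, f t * deriv (deriv f) t
          ≤ |∫ t in (0:ℝ)..1, f t * deriv (deriv f) t| := neg_le_abs _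
        _ ≤ ∫ t in (0:ℝ)..1, |f t * deriv (deriv f) t| := this
        _ = ∫ t in (0:ℝ)..1, |f t| * |deriv (deriv f) t| := by
            simp only [abs_mul]
    exact h1' ▸ (h2'.trans (aux_CS _ _ hcf hcf''))
  -- Rolle
  obtain ⟨c, hc, hc0⟩ := exists_deriv_eq_zero (by norm_num : (0:ℝ) < 1)
    hcf.continuousOn (h0.trans h1.symm)
  -- FTC: (f' x)^2 = ∫ c..x 2 f' f''
  have hftc : (deriv f x) ^ 2 - (deriv f c) ^ 2
      = ∫ t in c..x, 2 * deriv f t * deriv (deriv f) t := by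
    rw [eq_comm]
    apply intervalIntegral.integral_eq_sub_of_hasDerivAt (f := fun t => deriv f t ^ 2)
    · intro t _
      have := ((hdf' t).hasDerivAt).fun_pow 2
      simpa [mul_comm, mul_assoc] using this
    · exact ((continuous_const.mul hcf').mul hcf'').intervalIntegrable _ _
  have hsq : (deriv f x) ^ 2 ≤ 2 * (R ^ ((1:ℝ)/2) * Q ^ ((1:ℝ)/2)) := by
    have hsub : Set.uIoc c x ⊆ Set.Ioc (0:ℝ) 1 := by
      rw [Set.uIoc]
      apply Set.Ioc_subset_Ioc
      · exact le_min hc.1.le hx.1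
      · exact max_le hc.2.le hx.2
    have habs : |∫ t in c..x, 2 * deriv f t * deriv (deriv f) t|
        ≤ ∫ t in (0:ℝ)..1, |2 * deriv f t * deriv (deriv f) t| := by
      calc |∫ t in c..x, 2 * deriv f t * deriv (deriv f) t|
          ≤ ∫ t in Set.uIoc c x, |2 * deriv f t * deriv (deriv f) t| := by
            simpa only [Real.norm_eq_abs] using
              intervalIntegral.norm_integral_le_integral_norm_uIoc (μ := volume)
              (a := c) (b := x) (f := fun t => 2 * deriv f t * deriv (deriv f) t)
        _ ≤ ∫ t in Set.Ioc (0:ℝ) 1, |2 * deriv f t * deriv (deriv f) t| := by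
            apply setIntegral_mono_set
            · exact (((continuous_const.mul hcf').mul hcf'').abs.integrableOn_Ioc)
            · exact Filter.Eventually.of_forall fun t => abs_nonneg _
            · exact Filter.Eventually.of_forall hsub
        _ = ∫ t in (0:ℝ)..1, |2 * deriv f t * deriv (deriv f) t| := by
            rw [intervalIntegral.integral_of_le (by norm_num)]
    have h2R : ∫ t in (0:ℝ)..1, |2 * deriv f t * deriv (deriv f) t|
        ≤ 2 * (R ^ ((1:ℝ)/2) * Q ^ ((1:ℝ)/2)) := by
      have : ∀ t, |2 * deriv f t * deriv (deriv f) t|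
          = 2 * (|deriv f t| * |deriv (deriv f) t|) := by
        intro t; rw [abs_mul, abs_mul]; ring_nf
      calc ∫ t in (0:ℝ)..1, |2 * deriv f t * deriv (deriv f) t|
          = 2 * ∫ t in (0:ℝ)..1, |deriv f t| * |deriv (deriv f) t| := by
            simp only [this]; rw [intervalIntegral.integral_const_mul]
        _ ≤ 2 * (R ^ ((1:ℝ)/2) * Q ^ ((1:ℝ)/2)) := by
            have := aux_CS _ _ hcf' hcf''
            linarith
    calc (deriv f x) ^ 2 = (deriv f x) ^ 2 - (deriv f c) ^ 2 := by rw [hc0]; ring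
      _ = ∫ t in c..x, 2 * deriv f t * deriv (deriv f) t := hftc
      _ ≤ |∫ t in c..x, 2 * deriv f t * deriv (deriv f) t| := le_abs_self _
      _ ≤ ∫ t in (0:ℝ)..1, |2 * deriv f t * deriv (deriv f) t| := habs
      _ ≤ 2 * (R ^ ((1:ℝ)/2) * Q ^ ((1:ℝ)/2)) := h2R
  -- combine
  have hR4 : R ^ ((1:ℝ)/2) ≤ P ^ ((1:ℝ)/4) * Q ^ ((1:ℝ)/4) := by
    calc R ^ ((1:ℝ)/2) ≤ (P ^ ((1:ℝ)/2) * Q ^ ((1:ℝ)/2)) ^ ((1:ℝ)/2) :=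
          Real.rpow_le_rpow hRpos hRle (by norm_num)
      _ = P ^ ((1:ℝ)/4) * Q ^ ((1:ℝ)/4) := by
          rw [Real.mul_rpow (Real.rpow_nonneg hPpos _) (Real.rpow_nonneg hQpos _),
            ← Real.rpow_mul hPpos, ← Real.rpow_mul hQpos]
          norm_num
  have hfinal : (deriv f x) ^ 2 ≤ 2 * (P ^ ((1:ℝ)/4) * Q ^ ((3:ℝ)/4)) := by
    have hQhalf : (0:ℝ) ≤ Q ^ ((1:ℝ)/2) := Real.rpow_nonneg hQpos _
    have : R ^ ((1:ℝ)/2) * Q ^ ((1:ℝ)/2) ≤ P ^ ((1:ℝ)/4) * Q ^ ((3:ℝ)/4) := by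
      calc R ^ ((1:ℝ)/2) * Q ^ ((1:ℝ)/2)
          ≤ (P ^ ((1:ℝ)/4) * Q ^ ((1:ℝ)/4)) * Q ^ ((1:ℝ)/2) :=
            mul_le_mul_of_nonneg_right hR4 hQhalf
        _ = P ^ ((1:ℝ)/4) * Q ^ ((3:ℝ)/4) := by
            rw [mul_assoc, ← Real.rpow_add' hQpos (by norm_num)]
            norm_num
    linarith [hsq]
  -- take square roots
  have := Real.sqrt_le_sqrt hfinal
  rw [Real.sqrt_sq_eq_abs] at this
  calc |deriv f x| ≤ Real.sqrt (2 * (P ^ ((1:ℝ)/4) * Q ^ ((3:ℝ)/4))) := this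
    _ = Real.sqrt 2 * P ^ ((1:ℝ)/8) * Q ^ ((3:ℝ)/8) := by
        rw [Real.sqrt_mul (by norm_num), Real.sqrt_mul (Real.rpow_nonneg hPpos _)]
        simp only [Real.sqrt_eq_rpow]
        rw [← Real.rpow_mul hPpos, ← Real.rpow_mul hQpos]
        norm_num; ring
end

section
/- Let u : [0,1] × [0,T] → ℝ be smooth. Then d/dt ∫_0^1 (∂_x^2 u)^2 (1 + (∂_x u)^2)^{-5/2} dx = ∫_0^1 [2 |γ_u'|^{-1} (k_u' / |γ_u'|)' + k_u^3] ∂_t u dx + [2 k_u ∂_t u' / |γ_u'|^2 − 2 k_u' ∂_t u / |γ_u'|^2 − k_u^2 u' ∂_t u / |γ_u'|]_{x=0}^{x=1}, where |γ_u'| = √(1+(∂_x u)^2), k_u = ∂_x^2 u / |γ_u'|^3, and prime denotes ∂_x. -/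
open MeasureTheory intervalIntegral

/-- spatial derivative `∂ₓu` -/
noncomputable def ux (u : ℝ → ℝ → ℝ) (x t : ℝ) : ℝ := deriv (fun y => u y t) x

/-- second spatial derivative `∂ₓ²u` -/
noncomputable def uxx (u : ℝ → ℝ → ℝ) (x t : ℝ) : ℝ := deriv (fun y => ux u y t) x

/-- time derivative `∂ₜu` -/
noncomputable def ut (u : ℝ → ℝ → ℝ) (x t : ℝ) : ℝ := deriv (fun s => u x s) t

/-- `|γ_u'| = √(1 + (∂ₓu)²)` -/
noncomputable def gg (u : ℝ → ℝ → ℝ) (x t : ℝ) : ℝ := Real.sqrt (1 + (ux u x t) ^ 2)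

/-- signed curvature `k_u = ∂ₓ²u / |γ_u'|³` -/
noncomputable def ku (u : ℝ → ℝ → ℝ) (x t : ℝ) : ℝ := uxx u x t / (gg u x t) ^ 3

/-- spatial derivative of the signed curvature, `k_u' = ∂ₓ k_u` -/
noncomputable def kux (u : ℝ → ℝ → ℝ) (x t : ℝ) : ℝ := deriv (fun y => ku u y t) x


noncomputable def pdx (f : ℝ × ℝ → ℝ) (z : ℝ × ℝ) : ℝ := fderiv ℝ f z (1, 0)
noncomputable def pdt (f : ℝ × ℝ → ℝ) (z : ℝ × ℝ) : ℝ := fderiv ℝ f z (0, 1)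

lemma ContDiff.pdx' {f : ℝ × ℝ → ℝ} (hf : ContDiff ℝ (⊤ : ℕ∞) f) : ContDiff ℝ (⊤ : ℕ∞) (pdx f) :=
  (hf.fderiv_right (by simp)).clm_apply contDiff_const

lemma ContDiff.pdt' {f : ℝ × ℝ → ℝ} (hf : ContDiff ℝ (⊤ : ℕ∞) f) : ContDiff ℝ (⊤ : ℕ∞) (pdt f) :=
  (hf.fderiv_right (by simp)).clm_apply contDiff_const

lemma hasDerivAt_pdx {f : ℝ × ℝ → ℝ} (hf : ContDiff ℝ (⊤ : ℕ∞) f) (x t : ℝ) :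
    HasDerivAt (fun y => f (y, t)) (pdx f (x, t)) x := by
  have h1 : HasDerivAt (fun y : ℝ => (y, t)) (((1 : ℝ), (0 : ℝ))) x :=
    (hasDerivAt_id x).prodMk (hasDerivAt_const x t)
  exact ((hf.differentiable (by simp) (x, t)).hasFDerivAt).comp_hasDerivAt x h1

lemma hasDerivAt_pdt {f : ℝ × ℝ → ℝ} (hf : ContDiff ℝ (⊤ : ℕ∞) f) (x t : ℝ) :
    HasDerivAt (fun s => f (x, s)) (pdt f (x, t)) t := by
  have h1 : HasDerivAt (fun s : ℝ => (x, s)) (((0 : ℝ), (1 : ℝ))) t :=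
    (hasDerivAt_const t x).prodMk (hasDerivAt_id t)
  exact ((hf.differentiable (by simp) (x, t)).hasFDerivAt).comp_hasDerivAt t h1

lemma pdx_pdt_comm {f : ℝ × ℝ → ℝ} (hf : ContDiff ℝ (⊤ : ℕ∞) f) : pdx (pdt f) = pdt (pdx f) := by
  funext z
  have hd : DifferentiableAt ℝ (fderiv ℝ f) z :=
    ((hf.fderiv_right (m := (⊤ : ℕ∞)) (by simp)).differentiable (by simp)) z
  have h1 : pdx (pdt f) z = fderiv ℝ (fderiv ℝ f) z (1, 0) (0, 1) := by
    show fderiv ℝ (fun w => fderiv ℝ f w ((0 : ℝ), (1 : ℝ))) z (1, 0) = _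
    rw [fderiv_clm_apply hd (differentiableAt_const _)]
    simp
  have h2 : pdt (pdx f) z = fderiv ℝ (fderiv ℝ f) z (0, 1) (1, 0) := by
    show fderiv ℝ (fun w => fderiv ℝ f w ((1 : ℝ), (0 : ℝ))) z (0, 1) = _
    rw [fderiv_clm_apply hd (differentiableAt_const _)]
    simp
  rw [h1, h2]
  exact second_derivative_symmetric
    (fun y => ((hf.differentiable (by simp)) y).hasFDerivAt) hd.hasFDerivAt _ _

noncomputable def PhiF (f : ℝ × ℝ → ℝ) : ℝ × ℝ → ℝ :=
  fun z => pdx (pdx f) z ^ 2 / Real.sqrt (1 + pdx f z ^ 2) ^ 5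

lemma contDiff_sqrtP {f : ℝ × ℝ → ℝ} (hf : ContDiff ℝ (⊤ : ℕ∞) f) :
    ContDiff ℝ (⊤ : ℕ∞) (fun z => Real.sqrt (1 + pdx f z ^ 2)) := by
  rw [contDiff_iff_contDiffAt]
  intro z
  exact (Real.contDiffAt_sqrt (by positivity)).comp z
    ((contDiff_const.add (hf.pdx'.pow 2)).contDiffAt)

lemma contDiff_PhiF {f : ℝ × ℝ → ℝ} (hf : ContDiff ℝ (⊤ : ℕ∞) f) : ContDiff ℝ (⊤ : ℕ∞) (PhiF f) :=
  (hf.pdx'.pdx'.pow 2).div ((contDiff_sqrtP hf).pow 5)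
    (fun z => pow_ne_zero _ (Real.sqrt_pos.2 (by positivity)).ne')

lemma step1 {f : ℝ × ℝ → ℝ} (hf : ContDiff ℝ (⊤ : ℕ∞) f) (t : ℝ) :
    HasDerivAt (fun s => ∫ x in (0:ℝ)..1, PhiF f (x, s))
      (∫ x in (0:ℝ)..1, pdt (PhiF f) (x, t)) t := by
  have hΦ : ContDiff ℝ (⊤ : ℕ∞) (PhiF f) := contDiff_PhiF hf
  have hΦc := hΦ.continuous
  have hΦtc : Continuous (pdt (PhiF f)) := hΦ.pdt'.continuous
  -- bound on compact set
  obtain ⟨C, hC⟩ := (isCompact_Icc.prod (isCompact_Icc (a := t - 1) (b := t + 1))).exists_bound_of_continuousOn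
    (f := pdt (PhiF f)) (hΦtc.continuousOn)
  have main := intervalIntegral.hasDerivAt_integral_of_dominated_loc_of_deriv_le
    (F := fun s x => PhiF f (x, s)) (F' := fun s x => pdt (PhiF f) (x, s))
    (x₀ := t) (s := Metric.ball t 1) (a := (0:ℝ)) (b := 1) (μ := volume) (bound := fun _ => C)
    (Metric.ball_mem_nhds t one_pos)
    (Filter.Eventually.of_forall fun s =>
      (hΦc.comp (continuous_id.prodMk continuous_const)).aestronglyMeasurable)
    ((hΦc.comp (continuous_id.prodMk continuous_const)).intervalIntegrable 0 1)
    ((hΦtc.comp (continuous_id.prodMk continuous_const)).aestronglyMeasurable)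
    (Filter.Eventually.of_forall fun x hx s hs => by
      apply hC
      constructor
      · rw [Set.uIoc_of_le (by norm_num : (0:ℝ) ≤ 1)] at hx
        exact ⟨hx.1.le, hx.2⟩
      · have := Metric.mem_ball.1 hs
        rw [Real.dist_eq] at this
        have := abs_lt.1 this
        constructor <;> simp <;> linarith)
    (intervalIntegrable_const)
    (Filter.Eventually.of_forall fun x hx s hs => hasDerivAt_pdt hΦ x s)
  exact main.2

section prev
variable {p q r v m : ℝ → ℝ} {x dp dq dr dv dm : ℝ}

lemma sqrt_pos' (a : ℝ) : 0 < Real.sqrt (1 + a ^ 2) :=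
  Real.sqrt_pos.2 (by positivity)

lemma sqrt_ne' (a : ℝ) : Real.sqrt (1 + a ^ 2) ≠ 0 := (sqrt_pos' a).ne'

lemma sq_sqrt' (a : ℝ) : Real.sqrt (1 + a ^ 2) ^ 2 = 1 + a ^ 2 :=
  Real.sq_sqrt (by positivity)

lemma hDg (hp : HasDerivAt p dp x) :
    HasDerivAt (fun y => Real.sqrt (1 + p y ^ 2))
      (p x * dp / Real.sqrt (1 + p x ^ 2)) x := by
  have h := (((hp.fun_pow 2).const_add 1).sqrt (by positivity))
  convert h using 1
  have := sqrt_ne' (p x)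
  field_simp
  ring

lemma hDk (hp : HasDerivAt p dp x) (hq : HasDerivAt q dq x) :
    HasDerivAt (fun y => q y / Real.sqrt (1 + p y ^ 2) ^ 3)
      (dq / Real.sqrt (1 + p x ^ 2) ^ 3 -
        3 * p x * dp * q x / Real.sqrt (1 + p x ^ 2) ^ 5) x := by
  have h := hq.fun_div ((hDg hp).fun_pow 3) (pow_ne_zero _ (sqrt_ne' (p x)))
  refine h.congr_deriv ?_
  have hs0 := sqrt_ne' (p x)
  set s := Real.sqrt (1 + p x ^ 2) with hsdef
  field_simp
  ring

lemma hDPhi (hp : HasDerivAt p dp x) (hq : HasDerivAt q dq x) :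
    HasDerivAt (fun y => q y ^ 2 / Real.sqrt (1 + p y ^ 2) ^ 5)
      (2 * q x * dq / Real.sqrt (1 + p x ^ 2) ^ 5 -
        5 * p x * dp * q x ^ 2 / Real.sqrt (1 + p x ^ 2) ^ 7) x := by
  have h := (hq.fun_pow 2).fun_div ((hDg hp).fun_pow 5) (pow_ne_zero _ (sqrt_ne' (p x)))
  refine h.congr_deriv ?_
  have hs0 := sqrt_ne' (p x)
  set s := Real.sqrt (1 + p x ^ 2) with hsdef
  field_simp
  ring

lemma hDkg (hp : HasDerivAt p dp x) (hq : HasDerivAt q dq x) (hr : HasDerivAt r dr x) :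
    HasDerivAt (fun y =>
        (r y / Real.sqrt (1 + p y ^ 2) ^ 3 -
          3 * p y * q y ^ 2 / Real.sqrt (1 + p y ^ 2) ^ 5) / Real.sqrt (1 + p y ^ 2))
      (dr / Real.sqrt (1 + p x ^ 2) ^ 4 -
        4 * r x * p x * dp / Real.sqrt (1 + p x ^ 2) ^ 6 -
        3 * (dp * q x ^ 2 + 2 * p x * q x * dq) / Real.sqrt (1 + p x ^ 2) ^ 6 +
        18 * p x ^ 2 * dp * q x ^ 2 / Real.sqrt (1 + p x ^ 2) ^ 8) x := by
  have hne := sqrt_ne' (p x)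
  have h1 := hr.fun_div ((hDg hp).fun_pow 3) (pow_ne_zero _ hne)
  have h2 := (((hp.const_mul 3).fun_mul (hq.fun_pow 2)).fun_div ((hDg hp).fun_pow 5) (pow_ne_zero _ hne))
  have h3 := (h1.fun_sub h2).fun_div (hDg hp) hne
  refine h3.congr_deriv ?_
  set s := Real.sqrt (1 + p x ^ 2) with hsdef
  field_simp
  ring

set_option maxHeartbeats 2000000 in
lemma hDB (hp : HasDerivAt p dp x) (hq : HasDerivAt q dq x) (hr : HasDerivAt r dr x)
    (hv : HasDerivAt v dv x) (hm : HasDerivAt m dm x) :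
    HasDerivAt (fun y =>
        2 * (q y / Real.sqrt (1 + p y ^ 2) ^ 3) * m y / Real.sqrt (1 + p y ^ 2) ^ 2 -
        2 * (r y / Real.sqrt (1 + p y ^ 2) ^ 3 -
              3 * p y * q y ^ 2 / Real.sqrt (1 + p y ^ 2) ^ 5) * v y /
            Real.sqrt (1 + p y ^ 2) ^ 2 -
        (q y / Real.sqrt (1 + p y ^ 2) ^ 3) ^ 2 * p y * v y / Real.sqrt (1 + p y ^ 2))
      (2 * dq * m x / Real.sqrt (1 + p x ^ 2) ^ 5 +
        2 * q x * dm / Real.sqrt (1 + p x ^ 2) ^ 5 -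
        10 * q x * m x * p x * dp / Real.sqrt (1 + p x ^ 2) ^ 7 -
        2 * dr * v x / Real.sqrt (1 + p x ^ 2) ^ 5 -
        2 * r x * dv / Real.sqrt (1 + p x ^ 2) ^ 5 +
        10 * r x * v x * p x * dp / Real.sqrt (1 + p x ^ 2) ^ 7 +
        5 * (dp * q x ^ 2 + 2 * p x * q x * dq) * v x / Real.sqrt (1 + p x ^ 2) ^ 7 +
        5 * p x * q x ^ 2 * dv / Real.sqrt (1 + p x ^ 2) ^ 7 -
        35 * p x ^ 2 * q x ^ 2 * v x * dp / Real.sqrt (1 + p x ^ 2) ^ 9) x := by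
  have hne := sqrt_ne' (p x)
  have ht1 := (((hDk hp hq).const_mul 2).fun_mul hm).fun_div ((hDg hp).fun_pow 2) (pow_ne_zero _ hne)
  have ha := hr.fun_div ((hDg hp).fun_pow 3) (pow_ne_zero _ hne)
  have hb := ((hp.const_mul 3).fun_mul (hq.fun_pow 2)).fun_div ((hDg hp).fun_pow 5) (pow_ne_zero _ hne)
  have ht2 := (((ha.fun_sub hb).const_mul 2).fun_mul hv).fun_div ((hDg hp).fun_pow 2) (pow_ne_zero _ hne)
  have ht3 := ((((hDk hp hq).fun_pow 2).fun_mul hp).fun_mul hv).fun_div (hDg hp) hne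
  have h := (ht1.fun_sub ht2).fun_sub ht3
  refine h.congr_deriv ?_
  set s := Real.sqrt (1 + p x ^ 2) with hsdef
  norm_num only [Nat.add_one_sub_one, pow_one]
  field_simp
  ring

lemma alg_key (p q r w v m n g : ℝ) (hg2 : g ^ 2 = 1 + p ^ 2) (hg0 : g ≠ 0) :
    2 * q * n / g ^ 5 - 5 * p * m * q ^ 2 / g ^ 7 =
      (2 * (1 / g) *
          (w / g ^ 4 - 4 * r * p * q / g ^ 6 - 3 * (q * q ^ 2 + 2 * p * q * r) / g ^ 6 +
            18 * p ^ 2 * q * q ^ 2 / g ^ 8) +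
        (q / g ^ 3) ^ 3) * v +
      (2 * r * m / g ^ 5 + 2 * q * n / g ^ 5 - 10 * q * m * p * q / g ^ 7 -
        2 * w * v / g ^ 5 - 2 * r * m / g ^ 5 + 10 * r * v * p * q / g ^ 7 +
        5 * (q * q ^ 2 + 2 * p * q * r) * v / g ^ 7 + 5 * p * q ^ 2 * m / g ^ 7 -
        35 * p ^ 2 * q ^ 2 * v * q / g ^ 9) := by
  field_simp
  linear_combination (q ^ 3 * v) * hg2

end prev

section master

lemma master (p q r w v m n : ℝ → ℝ)
    (hp : ∀ x, HasDerivAt p (q x) x) (hq : ∀ x, HasDerivAt q (r x) x)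
    (hr : ∀ x, HasDerivAt r (w x) x) (hv : ∀ x, HasDerivAt v (m x) x)
    (hm : ∀ x, HasDerivAt m (n x) x) (hcw : Continuous w) (hcn : Continuous n) :
    (∫ x in (0:ℝ)..1,
        (2 * q x * n x / Real.sqrt (1 + p x ^ 2) ^ 5 -
          5 * p x * m x * q x ^ 2 / Real.sqrt (1 + p x ^ 2) ^ 7)) =
      (∫ x in (0:ℝ)..1,
        (2 * (1 / Real.sqrt (1 + p x ^ 2)) *
            (w x / Real.sqrt (1 + p x ^ 2) ^ 4 -
              4 * r x * p x * q x / Real.sqrt (1 + p x ^ 2) ^ 6 -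
              3 * (q x * q x ^ 2 + 2 * p x * q x * r x) / Real.sqrt (1 + p x ^ 2) ^ 6 +
              18 * p x ^ 2 * q x * q x ^ 2 / Real.sqrt (1 + p x ^ 2) ^ 8) +
          (q x / Real.sqrt (1 + p x ^ 2) ^ 3) ^ 3) * v x) +
      (((fun y => 2 * (q y / Real.sqrt (1 + p y ^ 2) ^ 3) * m y / Real.sqrt (1 + p y ^ 2) ^ 2 -
          2 * (r y / Real.sqrt (1 + p y ^ 2) ^ 3 -
                3 * p y * q y ^ 2 / Real.sqrt (1 + p y ^ 2) ^ 5) * v y /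
              Real.sqrt (1 + p y ^ 2) ^ 2 -
          (q y / Real.sqrt (1 + p y ^ 2) ^ 3) ^ 2 * p y * v y / Real.sqrt (1 + p y ^ 2)) 1) -
        ((fun y => 2 * (q y / Real.sqrt (1 + p y ^ 2) ^ 3) * m y / Real.sqrt (1 + p y ^ 2) ^ 2 -
          2 * (r y / Real.sqrt (1 + p y ^ 2) ^ 3 -
                3 * p y * q y ^ 2 / Real.sqrt (1 + p y ^ 2) ^ 5) * v y /
              Real.sqrt (1 + p y ^ 2) ^ 2 -
          (q y / Real.sqrt (1 + p y ^ 2) ^ 3) ^ 2 * p y * v y / Real.sqrt (1 + p y ^ 2)) 0)) := by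
  have hcp : Continuous p := by
    rw [continuous_iff_continuousAt]; exact fun x => (hp x).continuousAt
  have hcq : Continuous q := by
    rw [continuous_iff_continuousAt]; exact fun x => (hq x).continuousAt
  have hcr : Continuous r := by
    rw [continuous_iff_continuousAt]; exact fun x => (hr x).continuousAt
  have hcv : Continuous v := by
    rw [continuous_iff_continuousAt]; exact fun x => (hv x).continuousAt
  have hcm : Continuous m := by
    rw [continuous_iff_continuousAt]; exact fun x => (hm x).continuousAt
  have hcs : Continuous (fun x => Real.sqrt (1 + p x ^ 2)) :=
    Real.continuous_sqrt.comp (by fun_prop)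
  have hsne : ∀ (x : ℝ) (k : ℕ), Real.sqrt (1 + p x ^ 2) ^ k ≠ 0 :=
    fun x k => pow_ne_zero _ (sqrt_ne' (p x))
  -- continuity of the two integrands
  have hAV : Continuous (fun x =>
      (2 * (1 / Real.sqrt (1 + p x ^ 2)) *
          (w x / Real.sqrt (1 + p x ^ 2) ^ 4 -
            4 * r x * p x * q x / Real.sqrt (1 + p x ^ 2) ^ 6 -
            3 * (q x * q x ^ 2 + 2 * p x * q x * r x) / Real.sqrt (1 + p x ^ 2) ^ 6 +
            18 * p x ^ 2 * q x * q x ^ 2 / Real.sqrt (1 + p x ^ 2) ^ 8) +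
        (q x / Real.sqrt (1 + p x ^ 2) ^ 3) ^ 3) * v x) := by
    apply Continuous.mul _ hcv
    apply Continuous.add
    · apply Continuous.mul
      · exact continuous_const.mul (continuous_const.div hcs fun x => sqrt_ne' (p x))
      · apply Continuous.add
        · apply Continuous.sub
          · apply Continuous.sub
            · exact hcw.div (hcs.pow 4) fun x => hsne x 4
            · exact (by fun_prop : Continuous fun x => 4 * r x * p x * q x).div
                (hcs.pow 6) fun x => hsne x 6
          · exact (by fun_prop : Continuous fun x =>
              3 * (q x * q x ^ 2 + 2 * p x * q x * r x)).div (hcs.pow 6) fun x => hsne x 6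
        · exact (by fun_prop : Continuous fun x => 18 * p x ^ 2 * q x * q x ^ 2).div
            (hcs.pow 8) fun x => hsne x 8
    · exact (hcq.div (hcs.pow 3) fun x => hsne x 3).pow 3
  have hDBc : Continuous (fun x =>
      2 * r x * m x / Real.sqrt (1 + p x ^ 2) ^ 5 +
        2 * q x * n x / Real.sqrt (1 + p x ^ 2) ^ 5 -
        10 * q x * m x * p x * q x / Real.sqrt (1 + p x ^ 2) ^ 7 -
        2 * w x * v x / Real.sqrt (1 + p x ^ 2) ^ 5 -
        2 * r x * m x / Real.sqrt (1 + p x ^ 2) ^ 5 +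
        10 * r x * v x * p x * q x / Real.sqrt (1 + p x ^ 2) ^ 7 +
        5 * (q x * q x ^ 2 + 2 * p x * q x * r x) * v x / Real.sqrt (1 + p x ^ 2) ^ 7 +
        5 * p x * q x ^ 2 * m x / Real.sqrt (1 + p x ^ 2) ^ 7 -
        35 * p x ^ 2 * q x ^ 2 * v x * q x / Real.sqrt (1 + p x ^ 2) ^ 9) := by
    apply Continuous.sub
    apply Continuous.add
    apply Continuous.add
    apply Continuous.add
    apply Continuous.sub
    apply Continuous.sub
    apply Continuous.sub
    apply Continuous.add
    · exact (by fun_prop : Continuous fun x => 2 * r x * m x).div (hcs.pow 5) fun x => hsne x 5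
    · exact (by fun_prop : Continuous fun x => 2 * q x * n x).div (hcs.pow 5) fun x => hsne x 5
    · exact (by fun_prop : Continuous fun x => 10 * q x * m x * p x * q x).div (hcs.pow 7)
        fun x => hsne x 7
    · exact (by fun_prop : Continuous fun x => 2 * w x * v x).div (hcs.pow 5) fun x => hsne x 5
    · exact (by fun_prop : Continuous fun x => 2 * r x * m x).div (hcs.pow 5) fun x => hsne x 5
    · exact (by fun_prop : Continuous fun x => 10 * r x * v x * p x * q x).div (hcs.pow 7)
        fun x => hsne x 7
    · exact (by fun_prop : Continuous fun x => 5 * (q x * q x ^ 2 + 2 * p x * q x * r x) * v x).div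
        (hcs.pow 7) fun x => hsne x 7
    · exact (by fun_prop : Continuous fun x => 5 * p x * q x ^ 2 * m x).div (hcs.pow 7)
        fun x => hsne x 7
    · exact (by fun_prop : Continuous fun x => 35 * p x ^ 2 * q x ^ 2 * v x * q x).div
        (hcs.pow 9) fun x => hsne x 9
  have hBder : ∀ x, HasDerivAt
      (fun y => 2 * (q y / Real.sqrt (1 + p y ^ 2) ^ 3) * m y / Real.sqrt (1 + p y ^ 2) ^ 2 -
          2 * (r y / Real.sqrt (1 + p y ^ 2) ^ 3 -
                3 * p y * q y ^ 2 / Real.sqrt (1 + p y ^ 2) ^ 5) * v y /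
              Real.sqrt (1 + p y ^ 2) ^ 2 -
          (q y / Real.sqrt (1 + p y ^ 2) ^ 3) ^ 2 * p y * v y / Real.sqrt (1 + p y ^ 2))
      (2 * r x * m x / Real.sqrt (1 + p x ^ 2) ^ 5 +
        2 * q x * n x / Real.sqrt (1 + p x ^ 2) ^ 5 -
        10 * q x * m x * p x * q x / Real.sqrt (1 + p x ^ 2) ^ 7 -
        2 * w x * v x / Real.sqrt (1 + p x ^ 2) ^ 5 -
        2 * r x * m x / Real.sqrt (1 + p x ^ 2) ^ 5 +
        10 * r x * v x * p x * q x / Real.sqrt (1 + p x ^ 2) ^ 7 +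
        5 * (q x * q x ^ 2 + 2 * p x * q x * r x) * v x / Real.sqrt (1 + p x ^ 2) ^ 7 +
        5 * p x * q x ^ 2 * m x / Real.sqrt (1 + p x ^ 2) ^ 7 -
        35 * p x ^ 2 * q x ^ 2 * v x * q x / Real.sqrt (1 + p x ^ 2) ^ 9) x :=
    fun x => hDB (hp x) (hq x) (hr x) (hv x) (hm x)
  have key : ∀ x : ℝ,
      2 * q x * n x / Real.sqrt (1 + p x ^ 2) ^ 5 -
        5 * p x * m x * q x ^ 2 / Real.sqrt (1 + p x ^ 2) ^ 7 =
      ((2 * (1 / Real.sqrt (1 + p x ^ 2)) *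
          (w x / Real.sqrt (1 + p x ^ 2) ^ 4 -
            4 * r x * p x * q x / Real.sqrt (1 + p x ^ 2) ^ 6 -
            3 * (q x * q x ^ 2 + 2 * p x * q x * r x) / Real.sqrt (1 + p x ^ 2) ^ 6 +
            18 * p x ^ 2 * q x * q x ^ 2 / Real.sqrt (1 + p x ^ 2) ^ 8) +
        (q x / Real.sqrt (1 + p x ^ 2) ^ 3) ^ 3) * v x) +
      (2 * r x * m x / Real.sqrt (1 + p x ^ 2) ^ 5 +
        2 * q x * n x / Real.sqrt (1 + p x ^ 2) ^ 5 -
        10 * q x * m x * p x * q x / Real.sqrt (1 + p x ^ 2) ^ 7 -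
        2 * w x * v x / Real.sqrt (1 + p x ^ 2) ^ 5 -
        2 * r x * m x / Real.sqrt (1 + p x ^ 2) ^ 5 +
        10 * r x * v x * p x * q x / Real.sqrt (1 + p x ^ 2) ^ 7 +
        5 * (q x * q x ^ 2 + 2 * p x * q x * r x) * v x / Real.sqrt (1 + p x ^ 2) ^ 7 +
        5 * p x * q x ^ 2 * m x / Real.sqrt (1 + p x ^ 2) ^ 7 -
        35 * p x ^ 2 * q x ^ 2 * v x * q x / Real.sqrt (1 + p x ^ 2) ^ 9) :=
    fun x => alg_key (p x) (q x) (r x) (w x) (v x) (m x) (n x) _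
      (sq_sqrt' (p x)) (sqrt_ne' (p x))
  rw [intervalIntegral.integral_congr (g := fun x =>
      ((2 * (1 / Real.sqrt (1 + p x ^ 2)) *
          (w x / Real.sqrt (1 + p x ^ 2) ^ 4 -
            4 * r x * p x * q x / Real.sqrt (1 + p x ^ 2) ^ 6 -
            3 * (q x * q x ^ 2 + 2 * p x * q x * r x) / Real.sqrt (1 + p x ^ 2) ^ 6 +
            18 * p x ^ 2 * q x * q x ^ 2 / Real.sqrt (1 + p x ^ 2) ^ 8) +
        (q x / Real.sqrt (1 + p x ^ 2) ^ 3) ^ 3) * v x) +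
      (2 * r x * m x / Real.sqrt (1 + p x ^ 2) ^ 5 +
        2 * q x * n x / Real.sqrt (1 + p x ^ 2) ^ 5 -
        10 * q x * m x * p x * q x / Real.sqrt (1 + p x ^ 2) ^ 7 -
        2 * w x * v x / Real.sqrt (1 + p x ^ 2) ^ 5 -
        2 * r x * m x / Real.sqrt (1 + p x ^ 2) ^ 5 +
        10 * r x * v x * p x * q x / Real.sqrt (1 + p x ^ 2) ^ 7 +
        5 * (q x * q x ^ 2 + 2 * p x * q x * r x) * v x / Real.sqrt (1 + p x ^ 2) ^ 7 +
        5 * p x * q x ^ 2 * m x / Real.sqrt (1 + p x ^ 2) ^ 7 -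
        35 * p x ^ 2 * q x ^ 2 * v x * q x / Real.sqrt (1 + p x ^ 2) ^ 9))
      (fun x _ => key x)]
  rw [intervalIntegral.integral_add (hAV.intervalIntegrable 0 1) (hDBc.intervalIntegrable 0 1)]
  congr 1
  exact intervalIntegral.integral_eq_sub_of_hasDerivAt (fun x _ => hBder x)
    (hDBc.intervalIntegrable 0 1)

end master

lemma rpow52 (a : ℝ) : (1 + a ^ 2) ^ ((5:ℝ)/2) = Real.sqrt (1 + a ^ 2) ^ 5 := by
  have h : (0:ℝ) ≤ 1 + a ^ 2 := by positivity
  rw [Real.sqrt_eq_rpow, ← Real.rpow_natCast ((1 + a ^ 2) ^ ((1:ℝ)/2)) 5, ← Real.rpow_mul h]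
  norm_num

set_option maxHeartbeats 4000000 in
/-- First variation of the bending energy along a smooth family of graphs:
`d/dt ∫₀¹ (∂ₓ²u)²(1+(∂ₓu)²)^{-5/2} dx
 = ∫₀¹ [2|γ'|⁻¹(k'/|γ'|)' + k³] ∂ₜu dx + [2k ∂ₜu'/|γ'|² − 2k' ∂ₜu/|γ'|² − k²u'∂ₜu/|γ'|]₀¹`. -/
theorem stmt8 (T : ℝ) (hT : 0 < T) (u : ℝ → ℝ → ℝ)
    (hu : ContDiff ℝ (⊤ : ℕ∞) fun p : ℝ × ℝ => u p.1 p.2) (t : ℝ) (ht : t ∈ Set.Icc 0 T) :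
    HasDerivAt
      (fun s => ∫ x in (0:ℝ)..1, (uxx u x s) ^ 2 / (1 + (ux u x s) ^ 2) ^ ((5:ℝ)/2))
      ((∫ x in (0:ℝ)..1,
          (2 * (1 / gg u x t) * deriv (fun y => kux u y t / gg u y t) x + (ku u x t) ^ 3) *
            ut u x t) +
        ((2 * ku u 1 t * deriv (fun y => ut u y t) 1 / (gg u 1 t) ^ 2 -
            2 * kux u 1 t * ut u 1 t / (gg u 1 t) ^ 2 -
            (ku u 1 t) ^ 2 * ux u 1 t * ut u 1 t / gg u 1 t) -
          (2 * ku u 0 t * deriv (fun y => ut u y t) 0 / (gg u 0 t) ^ 2 -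
            2 * kux u 0 t * ut u 0 t / (gg u 0 t) ^ 2 -
            (ku u 0 t) ^ 2 * ux u 0 t * ut u 0 t / gg u 0 t))) t := by
  set F : ℝ × ℝ → ℝ := fun p => u p.1 p.2 with hF
  -- identifications of the statement's operators with partial-derivative functions
  have hux : ∀ x s : ℝ, ux u x s = pdx F (x, s) := fun x s => (hasDerivAt_pdx hu x s).deriv
  have huxx : ∀ x s : ℝ, uxx u x s = pdx (pdx F) (x, s) := by
    intro x s
    have h : (fun y => ux u y s) = fun y => pdx F (y, s) := funext fun y => hux y s
    show deriv (fun y => ux u y s) x = _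
    rw [h]
    exact (hasDerivAt_pdx hu.pdx' x s).deriv
  have hut : ∀ x s : ℝ, ut u x s = pdt F (x, s) := fun x s => (hasDerivAt_pdt hu x s).deriv
  have hutx : ∀ x s : ℝ, deriv (fun y => ut u y s) x = pdx (pdt F) (x, s) := by
    intro x s
    have h : (fun y => ut u y s) = fun y => pdt F (y, s) := funext fun y => hut y s
    rw [h]
    exact (hasDerivAt_pdx hu.pdt' x s).deriv
  have hgg : ∀ x s : ℝ, gg u x s = Real.sqrt (1 + pdx F (x, s) ^ 2) := by
    intro x s
    show Real.sqrt (1 + ux u x s ^ 2) = _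
    rw [hux]
  have hku : ∀ x s : ℝ, ku u x s =
      pdx (pdx F) (x, s) / Real.sqrt (1 + pdx F (x, s) ^ 2) ^ 3 := by
    intro x s
    show uxx u x s / gg u x s ^ 3 = _
    rw [huxx, hgg]
  -- spatial derivatives
  have hPd : ∀ x s : ℝ, HasDerivAt (fun y => pdx F (y, s)) (pdx (pdx F) (x, s)) x :=
    fun x s => hasDerivAt_pdx hu.pdx' x s
  have hQd : ∀ x s : ℝ, HasDerivAt (fun y => pdx (pdx F) (y, s))
      (pdx (pdx (pdx F)) (x, s)) x := fun x s => hasDerivAt_pdx hu.pdx'.pdx' x s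
  have hRd : ∀ x s : ℝ, HasDerivAt (fun y => pdx (pdx (pdx F)) (y, s))
      (pdx (pdx (pdx (pdx F))) (x, s)) x := fun x s => hasDerivAt_pdx hu.pdx'.pdx'.pdx' x s
  have hVd : ∀ x s : ℝ, HasDerivAt (fun y => pdt F (y, s)) (pdx (pdt F) (x, s)) x :=
    fun x s => hasDerivAt_pdx hu.pdt' x s
  have hMd : ∀ x s : ℝ, HasDerivAt (fun y => pdx (pdt F) (y, s))
      (pdx (pdx (pdt F)) (x, s)) x := fun x s => hasDerivAt_pdx hu.pdt'.pdx' x s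
  have hkux : ∀ x s : ℝ, kux u x s =
      pdx (pdx (pdx F)) (x, s) / Real.sqrt (1 + pdx F (x, s) ^ 2) ^ 3 -
        3 * pdx F (x, s) * pdx (pdx F) (x, s) ^ 2 / Real.sqrt (1 + pdx F (x, s) ^ 2) ^ 5 := by
    intro x s
    have h : (fun y => ku u y s) = fun y =>
        pdx (pdx F) (y, s) / Real.sqrt (1 + pdx F (y, s) ^ 2) ^ 3 := funext fun y => hku y s
    show deriv (fun y => ku u y s) x = _
    rw [h, (hDk (hPd x s) (hQd x s)).deriv]
    ring
  have hkxg : ∀ x : ℝ, deriv (fun y => kux u y t / gg u y t) x =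
      pdx (pdx (pdx (pdx F))) (x, t) / Real.sqrt (1 + pdx F (x, t) ^ 2) ^ 4 -
        4 * pdx (pdx (pdx F)) (x, t) * pdx F (x, t) * pdx (pdx F) (x, t) /
          Real.sqrt (1 + pdx F (x, t) ^ 2) ^ 6 -
        3 * (pdx (pdx F) (x, t) * pdx (pdx F) (x, t) ^ 2 +
            2 * pdx F (x, t) * pdx (pdx F) (x, t) * pdx (pdx (pdx F)) (x, t)) /
          Real.sqrt (1 + pdx F (x, t) ^ 2) ^ 6 +
        18 * pdx F (x, t) ^ 2 * pdx (pdx F) (x, t) * pdx (pdx F) (x, t) ^ 2 /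
          Real.sqrt (1 + pdx F (x, t) ^ 2) ^ 8 := by
    intro x
    have h : (fun y => kux u y t / gg u y t) = fun y =>
        (pdx (pdx (pdx F)) (y, t) / Real.sqrt (1 + pdx F (y, t) ^ 2) ^ 3 -
          3 * pdx F (y, t) * pdx (pdx F) (y, t) ^ 2 / Real.sqrt (1 + pdx F (y, t) ^ 2) ^ 5) /
          Real.sqrt (1 + pdx F (y, t) ^ 2) :=
      funext fun y => by rw [hkux, hgg]
    rw [h]
    exact (hDkg (hPd x t) (hQd x t) (hRd x t)).deriv
  -- time derivative of the integrand, pointwise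
  have hswap1 : pdx (pdt F) = pdt (pdx F) := pdx_pdt_comm hu
  have hswap2 : pdx (pdt (pdx F)) = pdt (pdx (pdx F)) := pdx_pdt_comm hu.pdx'
  have hpt : ∀ x : ℝ, pdt (PhiF F) (x, t) =
      2 * pdx (pdx F) (x, t) * pdx (pdx (pdt F)) (x, t) /
          Real.sqrt (1 + pdx F (x, t) ^ 2) ^ 5 -
        5 * pdx F (x, t) * pdx (pdt F) (x, t) * pdx (pdx F) (x, t) ^ 2 /
          Real.sqrt (1 + pdx F (x, t) ^ 2) ^ 7 := by
    intro x
    have h1 : HasDerivAt (fun s => PhiF F (x, s)) (pdt (PhiF F) (x, t)) t :=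
      hasDerivAt_pdt (contDiff_PhiF hu) x t
    have hP : HasDerivAt (fun s => pdx F (x, s)) (pdx (pdt F) (x, t)) t := by
      have h := hasDerivAt_pdt hu.pdx' x t
      rwa [← hswap1] at h
    have hQ : HasDerivAt (fun s => pdx (pdx F) (x, s)) (pdx (pdx (pdt F)) (x, t)) t := by
      have h := hasDerivAt_pdt hu.pdx'.pdx' x t
      rw [← hswap2] at h
      rwa [← hswap1] at h
    exact h1.unique (hDPhi hP hQ)
  -- continuity of 4th-order terms
  have hcw : Continuous fun x => pdx (pdx (pdx (pdx F))) (x, t) :=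
    (hu.pdx'.pdx'.pdx'.pdx'.continuous).comp (continuous_id.prodMk continuous_const)
  have hcn : Continuous fun x => pdx (pdx (pdt F)) (x, t) :=
    (hu.pdt'.pdx'.pdx'.continuous).comp (continuous_id.prodMk continuous_const)
  have hmaster := master (fun x => pdx F (x, t)) (fun x => pdx (pdx F) (x, t))
    (fun x => pdx (pdx (pdx F)) (x, t)) (fun x => pdx (pdx (pdx (pdx F))) (x, t))
    (fun x => pdt F (x, t)) (fun x => pdx (pdt F) (x, t)) (fun x => pdx (pdx (pdt F)) (x, t))
    (fun x => hPd x t) (fun x => hQd x t) (fun x => hRd x t) (fun x => hVd x t)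
    (fun x => hMd x t) hcw hcn
  beta_reduce at hmaster
  -- identify the original integral with the smooth one
  have hfun : (fun s => ∫ x in (0:ℝ)..1,
      (uxx u x s) ^ 2 / (1 + (ux u x s) ^ 2) ^ ((5:ℝ)/2)) =
      fun s => ∫ x in (0:ℝ)..1, PhiF F (x, s) := by
    funext s
    apply intervalIntegral.integral_congr
    intro x _
    show (uxx u x s) ^ 2 / (1 + (ux u x s) ^ 2) ^ ((5:ℝ)/2) = _
    rw [huxx, hux, rpow52]
    rfl
  have e1 : (∫ x in (0:ℝ)..1, pdt (PhiF F) (x, t)) =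
      ∫ x in (0:ℝ)..1,
        (2 * pdx (pdx F) (x, t) * pdx (pdx (pdt F)) (x, t) /
            Real.sqrt (1 + pdx F (x, t) ^ 2) ^ 5 -
          5 * pdx F (x, t) * pdx (pdt F) (x, t) * pdx (pdx F) (x, t) ^ 2 /
            Real.sqrt (1 + pdx F (x, t) ^ 2) ^ 7) :=
    intervalIntegral.integral_congr fun x _ => hpt x
  have e2 : (∫ x in (0:ℝ)..1,
      (2 * (1 / gg u x t) * deriv (fun y => kux u y t / gg u y t) x + (ku u x t) ^ 3) *
        ut u x t) =
      ∫ x in (0:ℝ)..1,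
        (2 * (1 / Real.sqrt (1 + pdx F (x, t) ^ 2)) *
            (pdx (pdx (pdx (pdx F))) (x, t) / Real.sqrt (1 + pdx F (x, t) ^ 2) ^ 4 -
              4 * pdx (pdx (pdx F)) (x, t) * pdx F (x, t) * pdx (pdx F) (x, t) /
                Real.sqrt (1 + pdx F (x, t) ^ 2) ^ 6 -
              3 * (pdx (pdx F) (x, t) * pdx (pdx F) (x, t) ^ 2 +
                  2 * pdx F (x, t) * pdx (pdx F) (x, t) * pdx (pdx (pdx F)) (x, t)) /
                Real.sqrt (1 + pdx F (x, t) ^ 2) ^ 6 +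
              18 * pdx F (x, t) ^ 2 * pdx (pdx F) (x, t) * pdx (pdx F) (x, t) ^ 2 /
                Real.sqrt (1 + pdx F (x, t) ^ 2) ^ 8) +
          (pdx (pdx F) (x, t) / Real.sqrt (1 + pdx F (x, t) ^ 2) ^ 3) ^ 3) *
          pdt F (x, t) :=
    intervalIntegral.integral_congr fun x _ => by
      rw [hkxg x, hgg x t, hku x t, hut x t]
  have e3 : ∀ y : ℝ,
      (2 * ku u y t * deriv (fun z => ut u z t) y / (gg u y t) ^ 2 -
        2 * kux u y t * ut u y t / (gg u y t) ^ 2 -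
        (ku u y t) ^ 2 * ux u y t * ut u y t / gg u y t) =
      (2 * (pdx (pdx F) (y, t) / Real.sqrt (1 + pdx F (y, t) ^ 2) ^ 3) *
          pdx (pdt F) (y, t) / Real.sqrt (1 + pdx F (y, t) ^ 2) ^ 2 -
        2 * (pdx (pdx (pdx F)) (y, t) / Real.sqrt (1 + pdx F (y, t) ^ 2) ^ 3 -
              3 * pdx F (y, t) * pdx (pdx F) (y, t) ^ 2 /
                Real.sqrt (1 + pdx F (y, t) ^ 2) ^ 5) * pdt F (y, t) /
            Real.sqrt (1 + pdx F (y, t) ^ 2) ^ 2 -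
        (pdx (pdx F) (y, t) / Real.sqrt (1 + pdx F (y, t) ^ 2) ^ 3) ^ 2 * pdx F (y, t) *
            pdt F (y, t) / Real.sqrt (1 + pdx F (y, t) ^ 2)) := by
    intro y
    rw [hku y t, hutx y t, hgg y t, hkux y t, hut y t, hux y t]
  rw [hfun, e2, e3 1, e3 0, ← hmaster, ← e1]
  exact step1 hu t
end
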